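/- Fix an integer r ≥ 1. Let ξ_1, …, ξ_m be i.i.d. centered real random variables with unit variance and finite moments of all orders, and let g_1, …, g_m be i.i.d. standard Gaussian random variables. Define χ_r(ξ) := m^{−r/2} Σ ξ_{n_1} ξ_{n_2} ⋯ ξ_{n_r}, where the sum runs over all tuples (n_1, …, n_r) ∈ [m]^r with n_i ≠ n_{i+1} for i = 1, …, r−1, and define χ_r(g) analogously. Then there exists a constant C > 0, depending only on r and on the law of ξ_1, such that E[ χ_r(ξ)² ] ≤ E[ χ_r(g)² ] + C/m. -/

import Mathlib

open MeasureTheory ProbabilityTheory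

/-- The set of chains `(n_1, …, n_r) ∈ [m]^r` with `n_i ≠ n_{i+1}`. -/
def chainSet (m r : ℕ) : Finset (Fin r → Fin m) :=
  Finset.univ.filter (fun n => ∀ i j : Fin r, (j : ℕ) = (i : ℕ) + 1 → n i ≠ n j)

/-- The normalised chain-indexed polynomial
`χ_r(ξ) = m^{−r/2} Σ_{n chain} ξ_{n_1} ⋯ ξ_{n_r}`. -/
noncomputable def chaos {Ω : Type*} {m : ℕ} (r : ℕ) (ξ : Fin m → Ω → ℝ) (ω : Ω) : ℝ :=
  (m : ℝ) ^ (-(r : ℝ) / 2) * ∑ n ∈ chainSet m r, ∏ i, ξ (n i) ω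

/-!
Expanding the square, `E[χ_r(ξ)²] = m^{-r} Σ_{(p,q)} ∏_j E[ξ^{k_j}]`, the sum running over pairs
of chains and `k_j` counting the occurrences of the index `j` in `(p, q)`. A term can differ
from its Gaussian counterpart only if no `k_j` equals `1` (otherwise both vanish, the entries
being centred) and some `k_j` is at least `3` (otherwise only moments of order `0` and `2`
occur, and these agree). Since `Σ_j k_j = 2r`, such a pair takes at most `r - 1` distinct values,
so there are `O(m^{r-1})` of them, each contributing a difference bounded by moments of order at
most `2r`. After the normalisation `m^{-r}` this leaves `O(1/m)`.
-/

open Finset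
open scoped ENNReal NNReal

section Combinatorics

variable {α β : Type*} [Fintype α] [Fintype β]

lemma two_mul_card_support_lt_sum {k : β → ℕ} (h1 : ∀ j, k j ≠ 1) (h3 : ∃ j, 3 ≤ k j) :
    2 * #{j | k j ≠ 0} < ∑ j, k j := by
  obtain ⟨j₀, hj₀⟩ := h3
  rw [← sum_filter_ne_zero, mul_comm, ← smul_eq_mul, ← sum_const]
  refine sum_lt_sum (fun j hj => ?_)
    ⟨j₀, by simp only [mem_filter, mem_univ, true_and]; omega, by omega⟩
  have := h1 j
  simp only [mem_filter, mem_univ, true_and] at hj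
  omega

lemma card_filter_card_image_le [DecidableEq α] [DecidableEq β] [Nonempty β] (k : ℕ) :
    #{n : α → β | #(univ.image n) ≤ k} ≤ k ^ Fintype.card α * Fintype.card β ^ k := by
  have hsurj : Set.SurjOn (fun w : (Fin k → β) × (α → Fin k) => w.1 ∘ w.2)
      Set.univ ({n : α → β | #(univ.image n) ≤ k} : Finset _) := by
    intro n hn
    replace hn : #(univ.image n) ≤ k := by simpa using hn
    obtain ⟨e⟩ := Function.Embedding.nonempty_of_card_le (β := Fin k)
      (by rwa [Fintype.card_coe, Fintype.card_fin] : Fintype.card (univ.image n) ≤ _)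
    refine ⟨(Function.extend e Subtype.val (fun _ => Classical.arbitrary β),
      fun i => e ⟨n i, mem_image_of_mem n (mem_univ i)⟩), trivial, ?_⟩
    funext i
    simp [e.injective.extend_apply]
  calc _ ≤ #(univ : Finset ((Fin k → β) × (α → Fin k))) :=
        card_le_card_of_surjOn _ (by simpa using hsurj)
    _ = _ := by simp [mul_comm]

variable [DecidableEq β]

def fiberCard (n : α → β) (j : β) : ℕ := #{i | n i = j}

lemma sum_fiberCard (n : α → β) : ∑ j, fiberCard n j = Fintype.card α := by
  simpa [fiberCard] using (card_eq_sum_card_fiberwise (s := univ) (t := univ) (f := n)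
    fun i _ => mem_univ (n i)).symm

lemma filter_fiberCard_ne_zero (n : α → β) :
    ({j | fiberCard n j ≠ 0} : Finset β) = univ.image n := by
  ext j
  rw [mem_filter, fiberCard, ← Nat.pos_iff_ne_zero, card_pos, filter_nonempty_iff]
  simp

lemma prod_comp_eq_prod_pow_fiberCard {M : Type*} [CommMonoid M] (f : β → M) (n : α → β) :
    ∏ i, f (n i) = ∏ j, f j ^ fiberCard n j := by
  rw [← prod_fiberwise univ n fun i => f (n i)]
  refine prod_congr rfl fun j _ => ?_
  rw [fiberCard, ← prod_const]
  exact prod_congr rfl fun i hi => by rw [(mem_filter.mp hi).2]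

end Combinatorics

section Moments

variable {α β : Type*} [Fintype α] [Fintype β] [DecidableEq β] {μ ν : Measure ℝ}

noncomputable def mixedMoment (μ : Measure ℝ) (n : α → β) : ℝ :=
  ∏ j, ∫ x, x ^ fiberCard n j ∂μ

lemma two_mul_card_image_lt_of_mixedMoment_ne [IsProbabilityMeasure μ] [IsProbabilityMeasure ν]
    (hμ : ∫ x, x ∂μ = 0) (hν : ∫ x, x ∂ν = 0) (h2 : ∫ x, x ^ 2 ∂μ = ∫ x, x ^ 2 ∂ν) {n : α → β}
    (hne : mixedMoment μ n ≠ mixedMoment ν n) : 2 * #(univ.image n) < Fintype.card α := by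
  rw [← filter_fiberCard_ne_zero n, ← sum_fiberCard n]
  refine two_mul_card_support_lt_sum (fun j hj => hne ?_) ?_
  · rw [mixedMoment, mixedMoment, prod_eq_zero (mem_univ j) (by simpa [hj] using hμ),
      prod_eq_zero (mem_univ j) (by simpa [hj] using hν)]
  · by_contra! hle
    refine hne (prod_congr rfl fun j _ => ?_)
    have := hle j
    interval_cases fiberCard n j <;> simp [hμ, hν, h2]

noncomputable def momentBound (μ : Measure ℝ) (N : ℕ) : ℝ :=
  1 + ∑ k ∈ range (N + 1), |∫ x, x ^ k ∂μ|

lemma one_le_momentBound (μ : Measure ℝ) (N : ℕ) : 1 ≤ momentBound μ N :=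
  le_add_of_nonneg_right (sum_nonneg fun _ _ => abs_nonneg _)

lemma abs_integral_pow_le_momentBound_pow [IsProbabilityMeasure μ] {k N : ℕ} (hk : k ≤ N) :
    |∫ x, x ^ k ∂μ| ≤ momentBound μ N ^ k := by
  rcases k.eq_zero_or_pos with rfl | hk₀
  · simp
  have hle : |∫ x, x ^ k ∂μ| ≤ momentBound μ N :=
    (single_le_sum (f := fun k => |∫ x, x ^ k ∂μ|) (fun _ _ => abs_nonneg _)
      (mem_range.2 (Nat.lt_succ_of_le hk))).trans (le_add_of_nonneg_left zero_le_one)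
  exact hle.trans (le_self_pow₀ (one_le_momentBound μ N) hk₀.ne')

lemma abs_mixedMoment_le [IsProbabilityMeasure μ] (n : α → β) :
    |mixedMoment μ n| ≤ momentBound μ (Fintype.card α) ^ Fintype.card α := by
  have hle : ∀ j, fiberCard n j ≤ Fintype.card α := fun j =>
    sum_fiberCard n ▸ single_le_sum (fun _ _ => Nat.zero_le _) (mem_univ j)
  calc |mixedMoment μ n| = ∏ j, |∫ x, x ^ fiberCard n j ∂μ| := abs_prod _ _
    _ ≤ ∏ j, momentBound μ (Fintype.card α) ^ fiberCard n j :=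
      prod_le_prod (fun _ _ => abs_nonneg _)
        fun j _ => abs_integral_pow_le_momentBound_pow (hle j)
    _ = _ := by rw [prod_pow_eq_pow_sum, sum_fiberCard]

lemma sum_mixedMoment_sub_le [DecidableEq α] [IsProbabilityMeasure μ] [IsProbabilityMeasure ν]
    (hμ : ∫ x, x ∂μ = 0) (hν : ∫ x, x ∂ν = 0) (h2 : ∫ x, x ^ 2 ∂μ = ∫ x, x ^ 2 ∂ν)
    (S : Finset (α → β)) :
    ∑ n ∈ S, (mixedMoment μ n - mixedMoment ν n) ≤
      #{n : α → β | 2 * #(univ.image n) < Fintype.card α} *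
        (momentBound μ (Fintype.card α) ^ Fintype.card α +
          momentBound ν (Fintype.card α) ^ Fintype.card α) := by
  set K := momentBound μ (Fintype.card α) ^ Fintype.card α +
    momentBound ν (Fintype.card α) ^ Fintype.card α
  have hK : 0 ≤ K := by
    have := one_le_momentBound μ (Fintype.card α)
    have := one_le_momentBound ν (Fintype.card α)
    positivity
  have hterm : ∀ n : α → β, mixedMoment μ n - mixedMoment ν n ≤
      if 2 * #(univ.image n) < Fintype.card α then K else 0 := by
    intro n
    split_ifs with h
    · have := abs_le.1 (abs_mixedMoment_le (μ := μ) n)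
      have := abs_le.1 (abs_mixedMoment_le (μ := ν) n)
      linarith
    · rw [sub_nonpos]
      by_contra hne
      exact h (two_mul_card_image_lt_of_mixedMoment_ne hμ hν h2 (ne_of_gt (not_le.1 hne)))
  calc ∑ n ∈ S, (mixedMoment μ n - mixedMoment ν n)
      ≤ ∑ n ∈ S, if 2 * #(univ.image n) < Fintype.card α then K else 0 :=
        sum_le_sum fun n _ => hterm n
    _ ≤ ∑ n, if 2 * #(univ.image n) < Fintype.card α then K else 0 :=
        sum_le_sum_of_subset_of_nonneg (subset_univ S) fun _ _ _ => by split_ifs <;> simp [hK]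
    _ = _ := by rw [sum_ite, sum_const_zero, add_zero, sum_const, nsmul_eq_mul]

end Moments

lemma integral_sq_gaussianReal_zero (v : ℝ≥0) : ∫ x, x ^ 2 ∂gaussianReal 0 v = v := by
  change ∫ x, id x ^ 2 ∂gaussianReal 0 v = v
  rw [← variance_of_integral_eq_zero aemeasurable_id integral_id_gaussianReal]
  exact variance_id_gaussianReal

lemma memLp_id_of_integrable_abs_pow {ν : Measure ℝ} [IsFiniteMeasure ν]
    (h : ∀ p : ℕ, Integrable (fun x => |x| ^ p) ν) (p : ℝ≥0) : MemLp id p ν := by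
  have hq : MemLp id (⌈p⌉₊ + 1 : ℕ) ν := by
    rw [← integrable_norm_rpow_iff aemeasurable_id.aestronglyMeasurable (by simp) (by simp)]
    simp_rw [ENNReal.toReal_natCast, Real.rpow_natCast, id, Real.norm_eq_abs]
    exact h _
  refine hq.mono_exponent ?_
  exact_mod_cast (Nat.le_ceil p).trans (by simp)

section Independence

variable {Ω : Type*} [MeasurableSpace Ω] {P : Measure Ω}

lemma integrable_prod_of_memLp [IsFiniteMeasure P] {ι : Type*} [Fintype ι] {f : ι → Ω → ℝ}
    (hf : ∀ i, MemLp (f i) (Fintype.card ι) P) : Integrable (fun ω => ∏ i, f i ω) P := by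
  refine (MemLp.prod' (p := fun _ => (Fintype.card ι : ℝ≥0∞)) fun i _ => hf i).integrable ?_
  rw [ENNReal.one_le_inv, sum_const, card_univ, nsmul_eq_mul]
  exact ENNReal.mul_inv_le_one _

variable {α β : Type*} [Fintype α] {ξ : β → Ω → ℝ} {ν : Measure ℝ}

lemma integrable_prod_comp (hmeas : ∀ j, Measurable (ξ j)) (hind : iIndepFun ξ P)
    (hmap : ∀ j, P.map (ξ j) = ν) (hmom : ∀ p : ℝ≥0, MemLp id p ν) (n : α → β) :
    Integrable (fun ω => ∏ i, ξ (n i) ω) P := by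
  have := hind.isProbabilityMeasure
  refine integrable_prod_of_memLp fun i => ?_
  have h := hmom (Fintype.card α)
  rw [← hmap (n i)] at h
  exact (memLp_map_measure_iff aestronglyMeasurable_id (hmeas (n i)).aemeasurable).1 h

variable [Fintype β] [DecidableEq β]

lemma integral_prod_comp_eq_mixedMoment (hmeas : ∀ j, Measurable (ξ j)) (hind : iIndepFun ξ P)
    (hmap : ∀ j, P.map (ξ j) = ν) (n : α → β) :
    ∫ ω, ∏ i, ξ (n i) ω ∂P = mixedMoment ν n := by
  have hfiber : ∀ ω, ∏ i, ξ (n i) ω = ∏ j, ξ j ω ^ fiberCard n j :=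
    fun ω => prod_comp_eq_prod_pow_fiberCard (fun j => ξ j ω) n
  simp_rw [hfiber]
  rw [hind.integral_fun_prod_comp (f := fun j x => x ^ fiberCard n j)
    (fun j => (hmeas j).aemeasurable) (fun j => by fun_prop)]
  refine prod_congr rfl fun j _ => ?_
  rw [← hmap j, integral_map (hmeas j).aemeasurable (by fun_prop)]

end Independence

lemma rpow_neg_div_two_sq {x : ℝ} (hx : 0 ≤ x) (r : ℕ) : (x ^ (-(r : ℝ) / 2)) ^ 2 = (x ^ r)⁻¹ := by
  rw [← Real.rpow_natCast, ← Real.rpow_mul hx, Nat.cast_ofNat, div_mul_cancel₀ _ two_ne_zero,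
    Real.rpow_neg hx, Real.rpow_natCast]

lemma chaos_sq {Ω : Type*} {m : ℕ} (r : ℕ) (ξ : Fin m → Ω → ℝ) (ω : Ω) :
    chaos r ξ ω ^ 2 = ((m : ℝ) ^ r)⁻¹ *
      ∑ u ∈ chainSet m r ×ˢ chainSet m r, ∏ i, ξ (Sum.elim u.1 u.2 i) ω := by
  rw [chaos, mul_pow, rpow_neg_div_two_sq (Nat.cast_nonneg m), sq, sum_mul_sum, ← sum_product']
  simp_rw [Fintype.prod_sum_type, Sum.elim_inl, Sum.elim_inr]

lemma integral_chaos_sq {Ω : Type*} [MeasurableSpace Ω] {P : Measure Ω} {m r : ℕ}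
    {ξ : Fin m → Ω → ℝ} {ν : Measure ℝ} (hmeas : ∀ j, Measurable (ξ j)) (hind : iIndepFun ξ P)
    (hmap : ∀ j, P.map (ξ j) = ν) (hmom : ∀ p : ℝ≥0, MemLp id p ν) :
    ∫ ω, chaos r ξ ω ^ 2 ∂P = ((m : ℝ) ^ r)⁻¹ *
      ∑ u ∈ chainSet m r ×ˢ chainSet m r, mixedMoment ν (Sum.elim u.1 u.2) := by
  simp_rw [chaos_sq, integral_const_mul]
  rw [integral_finsetSum _ fun u _ => integrable_prod_comp hmeas hind hmap hmom _]
  simp_rw [integral_prod_comp_eq_mixedMoment hmeas hind hmap]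

lemma card_filter_two_mul_card_image_lt_le {r m : ℕ} [NeZero m] :
    #{n : Fin r ⊕ Fin r → Fin m | 2 * #(univ.image n) < 2 * r} ≤
      (r - 1) ^ (2 * r) * m ^ (r - 1) := by
  have hsub : univ.filter (fun n : Fin r ⊕ Fin r → Fin m => 2 * #(univ.image n) < 2 * r) ⊆
      univ.filter fun n => #(univ.image n) ≤ r - 1 :=
    monotone_filter_right _ fun n _ h => by omega
  simpa [two_mul] using (card_le_card hsub).trans (card_filter_card_image_le (r - 1))

lemma integral_chaos_sq_sub_le {Ω : Type*} [MeasurableSpace Ω] {P : Measure Ω} {m r : ℕ}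
    [NeZero m] (hr : 1 ≤ r) {μ ν : Measure ℝ} [IsProbabilityMeasure μ] [IsProbabilityMeasure ν]
    (hμ1 : ∫ x, x ∂μ = 0) (hν1 : ∫ x, x ∂ν = 0) (h2 : ∫ x, x ^ 2 ∂μ = ∫ x, x ^ 2 ∂ν)
    (hμ : ∀ p : ℝ≥0, MemLp id p μ) (hν : ∀ p : ℝ≥0, MemLp id p ν) {ξ g : Fin m → Ω → ℝ}
    (hξ : ∀ j, Measurable (ξ j)) (hg : ∀ j, Measurable (g j))
    (hiξ : iIndepFun ξ P) (hig : iIndepFun g P)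
    (hdξ : ∀ j, P.map (ξ j) = μ) (hdg : ∀ j, P.map (g j) = ν) :
    ∫ ω, chaos r ξ ω ^ 2 ∂P - ∫ ω, chaos r g ω ^ 2 ∂P ≤
      (momentBound μ (2 * r) ^ (2 * r) + momentBound ν (2 * r) ^ (2 * r)) *
        ((r - 1) ^ (2 * r) : ℕ) / m := by
  set K := momentBound μ (2 * r) ^ (2 * r) + momentBound ν (2 * r) ^ (2 * r)
  have hK : 0 ≤ K := by
    have := one_le_momentBound μ (2 * r)
    have := one_le_momentBound ν (2 * r)
    positivity
  set S := (chainSet m r ×ˢ chainSet m r).map (Equiv.sumArrowEquivProdArrow _ _ _).symm.toEmbedding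
  have hsum := sum_mixedMoment_sub_le hμ1 hν1 h2 S
  rw [Fintype.card_sum, Fintype.card_fin, ← two_mul] at hsum
  rw [integral_chaos_sq hξ hiξ hdξ hμ, integral_chaos_sq hg hig hdg hν, ← mul_sub,
    ← sum_sub_distrib]
  calc _ = ((m : ℝ) ^ r)⁻¹ * ∑ n ∈ S, (mixedMoment μ n - mixedMoment ν n) := by
        rw [sum_map]
        rfl
    _ ≤ ((m : ℝ) ^ r)⁻¹ * (#{n : Fin r ⊕ Fin r → Fin m | 2 * #(univ.image n) < 2 * r} * K) := by
        gcongr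
    _ ≤ ((m : ℝ) ^ r)⁻¹ * (((r - 1) ^ (2 * r) * m ^ (r - 1) : ℕ) * K) := by
        gcongr
        exact card_filter_two_mul_card_image_lt_le
    _ = K * ((r - 1) ^ (2 * r) : ℕ) / m := by
        obtain ⟨s, rfl⟩ := Nat.exists_eq_add_of_le' hr
        have : (m : ℝ) ≠ 0 := NeZero.ne _
        push_cast
        field_simp
        ring

/-- comparison of the second moment of the chain chaos `χ_r` under
general i.i.d. centred unit-variance entries (with all moments finite) with the
one under standard Gaussian entries, up to an error `C/m`. -/
theorem stmt19 (r : ℕ) (hr : 1 ≤ r)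
    (ν : Measure ℝ) [IsProbabilityMeasure ν]
    (hcent : ∫ x, x ∂ν = 0) (hvar : ∫ x, x ^ 2 ∂ν = 1)
    (hmom : ∀ p : ℕ, Integrable (fun x => |x| ^ p) ν) :
    ∃ C : ℝ, 0 < C ∧
      ∀ (m : ℕ), 1 ≤ m →
        ∀ (Ω : Type) (_ : MeasurableSpace Ω) (P : Measure Ω) (_ : IsProbabilityMeasure P)
          (ξ g : Fin m → Ω → ℝ),
          (∀ j, Measurable (ξ j)) → (∀ j, Measurable (g j)) →
          iIndepFun ξ P →
          (∀ j, P.map (ξ j) = ν) →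
          iIndepFun g P →
          (∀ j, P.map (g j) = gaussianReal 0 1) →
          ∫ ω, (chaos r ξ ω) ^ 2 ∂P ≤ (∫ ω, (chaos r g ω) ^ 2 ∂P) + C / m := by
  set γ := gaussianReal 0 1
  have hγ2 : ∫ x, x ^ 2 ∂ν = ∫ x, x ^ 2 ∂γ := by
    rw [hvar, integral_sq_gaussianReal_zero, NNReal.coe_one]
  set K := momentBound ν (2 * r) ^ (2 * r) + momentBound γ (2 * r) ^ (2 * r)
  have hK : 0 ≤ K := by
    have := one_le_momentBound ν (2 * r)
    have := one_le_momentBound γ (2 * r)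
    positivity
  refine ⟨K * ((r - 1) ^ (2 * r) : ℕ) + 1, by positivity, ?_⟩
  intro m hm Ω _ P _ ξ g hξ hg hiξ hdξ hig hdg
  have : NeZero m := ⟨by omega⟩
  have hdiff := integral_chaos_sq_sub_le hr hcent integral_id_gaussianReal hγ2
    (memLp_id_of_integrable_abs_pow hmom) memLp_id_gaussianReal hξ hg hiξ hig hdξ hdg
  have hC : K * ((r - 1) ^ (2 * r) : ℕ) / m ≤ (K * ((r - 1) ^ (2 * r) : ℕ) + 1) / m := by
    gcongr
    linarith
  linarith
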